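/- Let Ω ⊆ ℝ^d be a bounded domain, (fₙ) a bounded sequence in L²(Ω) with fₙ ⇀ f weakly in L², and φₙ, φ : Ω → Ω measure-preserving-up-to-bounded-Jacobian C¹-diffeomorphisms with φₙ → φ and Dφₙ → Dφ uniformly, with |det Dφₙ| uniformly bounded above and below by positive constants. Then fₙ ∘ φₙ ⇀ f ∘ φ weakly in L²(Ω). -/

import Mathlib

/-!
By density of bounded continuous functions in `L²`, and since `fₙ ∘ φₙ` is bounded in `L²`
(uniform boundedness, and `|det Dφₙ| ≥ c` in the change of variables), it suffices to test
against a bounded continuous `g`. For such `g` put `G = (g ∘ φ⁻¹) |det Dφ⁻¹|`. Changing variables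
by `φₙ` gives `∫ fₙ G = ∫ (fₙ ∘ φₙ) wₙ` with `wₙ = |det Dφₙ| (G ∘ φₙ)`, and by `φ` gives
`∫ f G = ∫ (f ∘ φ) g`. The inverse function theorem makes `φ⁻¹`, hence `G`, continuous on `Ω`, so
`wₙ → |det Dφ| (G ∘ φ) = g` boundedly and pointwise, hence in `L²`; weak convergence `fₙ ⇀ f`
tested against `G` then gives the claim.
-/

open Filter Topology MeasureTheory Set Function
open scoped ENNReal NNReal BoundedContinuousFunction

section L2Pairing

variable {α : Type*} [MeasurableSpace α] {μ : Measure α}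

theorem integral_mul_eq_inner_of_ae_eq {F G : Lp ℝ 2 μ} {u v : α → ℝ}
    (hu : F =ᵐ[μ] u) (hv : G =ᵐ[μ] v) : ∫ x, u x * v x ∂μ = inner ℝ F G := by
  rw [L2.inner_def]
  refine integral_congr_ae ?_
  filter_upwards [hu, hv] with x hux hvx
  simp [hux, hvx, mul_comm]

theorem abs_integral_mul_le_eLpNorm_mul_eLpNorm {u v : α → ℝ} (hu : MemLp u 2 μ)
    (hv : MemLp v 2 μ) :
    |∫ x, u x * v x ∂μ| ≤ (eLpNorm u 2 μ).toReal * (eLpNorm v 2 μ).toReal := by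
  rw [integral_mul_eq_inner_of_ae_eq hu.coeFn_toLp hv.coeFn_toLp, ← Lp.norm_toLp u hu,
    ← Lp.norm_toLp v hv]
  exact abs_real_inner_le_norm _ _

theorem exists_eLpNorm_le_of_bddAbove_integral_mul {u : ℕ → α → ℝ} (hu : ∀ n, MemLp (u n) 2 μ)
    (h : ∀ g, MemLp g 2 μ → BddAbove (range fun n => |∫ x, u n x * g x ∂μ|)) :
    ∃ M : ℝ≥0, ∀ n, eLpNorm (u n) 2 μ ≤ M := by
  have hpairing (n : ℕ) (G : Lp ℝ 2 μ) :
      innerSL ℝ ((hu n).toLp (u n)) G = ∫ x, u n x * G x ∂μ :=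
    (integral_mul_eq_inner_of_ae_eq (hu n).coeFn_toLp EventuallyEq.rfl).symm
  obtain ⟨C, hC⟩ := banach_steinhaus (g := fun n => innerSL ℝ ((hu n).toLp (u n)))
    fun G => by
      obtain ⟨C, hC⟩ := h G (Lp.memLp G)
      exact ⟨C, fun n => by simpa only [hpairing, Real.norm_eq_abs] using hC (mem_range_self n)⟩
  refine ⟨C.toNNReal, fun n => ?_⟩
  rw [← Lp.enorm_toLp (hu n), ← ofReal_norm]
  exact ENNReal.ofReal_le_ofReal ((innerSL_apply_norm ℝ _).symm.trans_le (hC n))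

theorem tendsto_integral_mul_of_tendsto_eLpNorm_sub {u w : ℕ → α → ℝ} {w₀ : α → ℝ} {M : ℝ≥0∞}
    {L : ℝ} (hu : ∀ n, MemLp (u n) 2 μ) (hM : ∀ n, eLpNorm (u n) 2 μ ≤ M) (hM_top : M ≠ ∞)
    (hw : ∀ n, MemLp (w n) 2 μ) (hw₀ : MemLp w₀ 2 μ)
    (hlim : Tendsto (fun n => eLpNorm (w n - w₀) 2 μ) atTop (𝓝 0))
    (h : Tendsto (fun n => ∫ x, u n x * w n x ∂μ) atTop (𝓝 L)) :
    Tendsto (fun n => ∫ x, u n x * w₀ x ∂μ) atTop (𝓝 L) := by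
  have hlim' : Tendsto (fun n => M.toReal * (eLpNorm (w n - w₀) 2 μ).toReal) atTop (𝓝 0) := by
    simpa using ((ENNReal.tendsto_toReal ENNReal.zero_ne_top).comp hlim).const_mul M.toReal
  have herr : Tendsto (fun n => ∫ x, u n x * (w n - w₀) x ∂μ) atTop (𝓝 0) :=
    squeeze_zero_norm (fun n => (abs_integral_mul_le_eLpNorm_mul_eLpNorm (hu n)
      ((hw n).sub hw₀)).trans (mul_le_mul_of_nonneg_right
        (ENNReal.toReal_mono hM_top (hM n)) ENNReal.toReal_nonneg)) hlim'
  rw [← sub_zero L]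
  refine (h.sub herr).congr fun n => ?_
  have hint {v : α → ℝ} (hv : MemLp v 2 μ) : Integrable (fun x => u n x * v x) μ :=
    (hu n).integrable_mul hv
  rw [← integral_sub (hint (hw n)) (hint ((hw n).sub hw₀))]
  simp only [Pi.sub_apply, mul_sub, sub_sub_cancel]

theorem unifIntegrable_of_ae_norm_le [IsFiniteMeasure μ] {ι : Type*} {p : ℝ≥0∞} (hp : 1 ≤ p)
    (hp' : p ≠ ∞) {u : ι → α → ℝ} {K : ℝ} (hK : ∀ i, ∀ᵐ x ∂μ, ‖u i x‖ ≤ K) :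
    UnifIntegrable u p μ := by
  intro ε hε
  obtain ⟨δ, hδ, hK'⟩ := unifIntegrable_const (ι := Unit) hp hp' (memLp_const (μ := μ) K) hε
  refine ⟨δ, hδ, fun i s hs hμs => (eLpNorm_mono_ae ?_).trans (hK' () s hs hμs)⟩
  filter_upwards [hK i] with x hx
  by_cases hxs : x ∈ s
  · simpa [hxs] using hx.trans (le_abs_self K)
  · simp [hxs]

theorem tendsto_eLpNorm_sub_of_tendsto_ae_of_norm_le [IsFiniteMeasure μ] {p : ℝ≥0∞}
    (hp : 1 ≤ p) (hp' : p ≠ ∞) {u : ℕ → α → ℝ} {u₀ : α → ℝ} {K : ℝ}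
    (hu : ∀ n, AEStronglyMeasurable (u n) μ) (hu₀ : MemLp u₀ p μ)
    (hK : ∀ n, ∀ᵐ x ∂μ, ‖u n x‖ ≤ K)
    (hlim : ∀ᵐ x ∂μ, Tendsto (fun n => u n x) atTop (𝓝 (u₀ x))) :
    Tendsto (fun n => eLpNorm (u n - u₀) p μ) atTop (𝓝 0) :=
  tendsto_Lp_finite_of_tendsto_ae hp hp' hu hu₀ (unifIntegrable_of_ae_norm_le hp hp' hK) hlim

end L2Pairing

section Density

variable {α : Type*} [TopologicalSpace α] [NormalSpace α] [MeasurableSpace α] [BorelSpace α]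
  {μ : Measure α} [μ.WeaklyRegular] [IsFiniteMeasure μ]

theorem tendsto_integral_mul_of_forall_boundedContinuous {u : ℕ → α → ℝ} {u₀ : α → ℝ}
    {M : ℝ≥0∞} (hu : ∀ n, MemLp (u n) 2 μ) (hu₀ : MemLp u₀ 2 μ)
    (hM : ∀ n, eLpNorm (u n) 2 μ ≤ M) (hM_top : M ≠ ∞)
    (h : ∀ g : α →ᵇ ℝ, Tendsto (fun n => ∫ x, u n x * g x ∂μ) atTop (𝓝 (∫ x, u₀ x * g x ∂μ)))
    {g : α → ℝ} (hg : MemLp g 2 μ) :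
    Tendsto (fun n => ∫ x, u n x * g x ∂μ) atTop (𝓝 (∫ x, u₀ x * g x ∂μ)) := by
  have hequi : Equicontinuous fun n (G : Lp ℝ 2 μ) => inner ℝ ((hu n).toLp (u n)) G := by
    refine (Metric.uniformEquicontinuous_of_continuity_modulus (fun t => M.toReal * t)
      (by simpa using (tendsto_id (x := 𝓝 (0:ℝ))).const_mul M.toReal) _
      fun G G' n => ?_).equicontinuous
    rw [dist_eq_norm, ← inner_sub_right, dist_eq_norm]
    refine (norm_inner_le_norm _ _).trans (mul_le_mul_of_nonneg_right ?_ (norm_nonneg _))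
    rw [Lp.norm_toLp]
    exact ENNReal.toReal_mono hM_top (hM n)
  have hclosed := hequi.isClosed_setOfPred_tendsto (l := atTop)
    (innerSL ℝ (hu₀.toLp u₀)).continuous
  have hpairing {G : Lp ℝ 2 μ} {v : α → ℝ} (hv : G =ᵐ[μ] v) :
      Tendsto (fun n => inner ℝ ((hu n).toLp (u n)) G) atTop (𝓝 (innerSL ℝ (hu₀.toLp u₀) G)) ↔
        Tendsto (fun n => ∫ x, u n x * v x ∂μ) atTop (𝓝 (∫ x, u₀ x * v x ∂μ)) := by
    simp only [innerSL_apply_apply, ← integral_mul_eq_inner_of_ae_eq (hu _).coeFn_toLp hv,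
      ← integral_mul_eq_inner_of_ae_eq hu₀.coeFn_toLp hv]
  have hdense : range (BoundedContinuousFunction.toLp 2 μ ℝ) ⊆
      {G | Tendsto (fun n => inner ℝ ((hu n).toLp (u n)) G) atTop
        (𝓝 (innerSL ℝ (hu₀.toLp u₀) G))} := by
    rintro _ ⟨g₀, rfl⟩
    exact (hpairing (BoundedContinuousFunction.coeFn_toLp 2 μ ℝ g₀)).2 (h g₀)
  exact (hpairing hg.coeFn_toLp).1 <| hclosed.closure_subset_iff.2 hdense
    (BoundedContinuousFunction.toLp_denseRange ℝ μ (p := 2) ℝ ENNReal.ofNat_ne_top (hg.toLp g))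

end Density

theorem continuousAt_invFunOn_of_hasStrictFDerivAt {𝕜 E F : Type*} [NontriviallyNormedField 𝕜]
    [NormedAddCommGroup E] [NormedSpace 𝕜 E] [CompleteSpace E] [NormedAddCommGroup F]
    [NormedSpace 𝕜 F] {f : E → F} {f' : E ≃L[𝕜] F} {s : Set E} {x : E} (hs : IsOpen s)
    (hinj : InjOn f s) (hx : x ∈ s) (hf : HasStrictFDerivAt f (f' : E →L[𝕜] F) x) :
    ContinuousAt (invFunOn f s) (f x) := by
  rw [ContinuousAt, hinj.leftInvOn_invFunOn hx]
  refine fun U hU => mem_map.2 <| mem_of_superset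
    (hf.map_nhds_eq_of_equiv ▸ image_mem_map (inter_mem hU (hs.mem_nhds hx))) ?_
  rintro _ ⟨y, hy, rfl⟩
  rw [mem_preimage, hinj.leftInvOn_invFunOn hy.2]
  exact hy.1

section PushforwardDensity

variable {E : Type*} [NormedAddCommGroup E] [NormedSpace ℝ E] {s : Set E} {T : E → E}

theorem continuousOn_invFunOn_of_det_ne_zero [FiniteDimensional ℝ E] (hs : IsOpen s)
    (hT : ContDiffOn ℝ 1 T s) (hbij : BijOn T s s) (hdet : ∀ x ∈ s, (fderiv ℝ T x).det ≠ 0) :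
    ContinuousOn (invFunOn T s) s := by
  rintro _ hy
  obtain ⟨x, hx, rfl⟩ := hbij.surjOn hy
  refine (continuousAt_invFunOn_of_hasStrictFDerivAt
    (f' := (LinearMap.equivOfDetNeZero _ (hdet x hx)).toContinuousLinearEquiv) hs hbij.injOn hx
    ?_).continuousWithinAt
  exact (hT.contDiffAt (hs.mem_nhds hx)).hasStrictFDerivAt one_ne_zero

/-- The paper's `(g ∘ T⁻¹) |det DT⁻¹|`. -/
noncomputable def pushforwardDensity (T : E → E) (s : Set E) (g : E → ℝ) (y : E) : ℝ :=
  g (invFunOn T s y) / |(fderiv ℝ T (invFunOn T s y)).det|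

theorem abs_det_mul_pushforwardDensity_apply (hinj : InjOn T s) {x : E} (hx : x ∈ s)
    (hdet : (fderiv ℝ T x).det ≠ 0) (g : E → ℝ) :
    |(fderiv ℝ T x).det| * pushforwardDensity T s g (T x) = g x := by
  rw [pushforwardDensity, hinj.leftInvOn_invFunOn hx]
  field_simp

theorem continuousOn_pushforwardDensity [FiniteDimensional ℝ E] (hs : IsOpen s)
    (hT : ContDiffOn ℝ 1 T s) (hbij : BijOn T s s) (hdet : ∀ x ∈ s, (fderiv ℝ T x).det ≠ 0)
    {g : E → ℝ} (hg : ContinuousOn g s) : ContinuousOn (pushforwardDensity T s g) s := by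
  have hinv := continuousOn_invFunOn_of_det_ne_zero hs hT hbij hdet
  have hmaps : MapsTo (invFunOn T s) s s := hbij.surjOn.mapsTo_invFunOn
  have hJ : ContinuousOn (fun x => |(fderiv ℝ T x).det|) s :=
    (ContinuousLinearMap.continuous_det.comp_continuousOn
      (hT.continuousOn_fderiv_of_isOpen hs le_rfl)).abs
  exact (hg.comp hinv hmaps).div (hJ.comp hinv hmaps)
    fun y hy => abs_ne_zero.2 (hdet _ (hmaps hy))

theorem abs_pushforwardDensity_le (hsurj : SurjOn T s s) {c K : ℝ} (hc : 0 < c)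
    (hJ : ∀ x ∈ s, c ≤ |(fderiv ℝ T x).det|) {g : E → ℝ} (hg : ∀ x ∈ s, |g x| ≤ K) {y : E}
    (hy : y ∈ s) : |pushforwardDensity T s g y| ≤ K / c := by
  have hx := hsurj.mapsTo_invFunOn hy
  rw [pushforwardDensity, abs_div, abs_abs]
  exact div_le_div₀ ((abs_nonneg _).trans (hg _ hx)) (hg _ hx) hc (hJ _ hx)

end PushforwardDensity

section ChangeOfVariables

variable {E : Type*} [NormedAddCommGroup E] [NormedSpace ℝ E] [FiniteDimensional ℝ E]
  [MeasurableSpace E] [BorelSpace E] {μ : Measure E} [μ.IsAddHaarMeasure] {s : Set E}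
  {T : E → E}

theorem setIntegral_mul_eq_setIntegral_comp_mul_abs_det (hs : MeasurableSet s)
    (hT : ∀ x ∈ s, DifferentiableAt ℝ T x) (hbij : BijOn T s s) (u G : E → ℝ) :
    ∫ y in s, u y * G y ∂μ = ∫ x in s, u (T x) * (|(fderiv ℝ T x).det| * G (T x)) ∂μ := by
  conv_lhs => rw [← hbij.image_eq]
  rw [integral_image_eq_integral_abs_det_fderiv_smul μ hs
    (fun x hx => (hT x hx).hasFDerivAt.hasFDerivWithinAt) hbij.injOn]
  simp only [smul_eq_mul, mul_left_comm]

theorem map_restrict_le_smul_of_le_abs_det (hs : MeasurableSet s)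
    (hT : ∀ x ∈ s, DifferentiableAt ℝ T x) (hbij : BijOn T s s) (hTm : Measurable T) {c : ℝ}
    (hc : 0 < c) (hJ : ∀ x ∈ s, c ≤ |(fderiv ℝ T x).det|) :
    (μ.restrict s).map T ≤ (ENNReal.ofReal c)⁻¹ • μ.restrict s := by
  have hT' : ∀ x ∈ s, HasFDerivWithinAt T (fderiv ℝ T x) s x :=
    fun x hx => (hT x hx).hasFDerivAt.hasFDerivWithinAt
  have hdens : ENNReal.ofReal c • μ.restrict s ≤
      (μ.restrict s).withDensity fun x => ENNReal.ofReal |(fderiv ℝ T x).det| := by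
    rw [← withDensity_const]
    refine withDensity_mono ?_
    filter_upwards [ae_restrict_mem hs] with x hx using ENNReal.ofReal_le_ofReal (hJ x hx)
  have hc' : ENNReal.ofReal c ≠ 0 := by positivity
  calc (μ.restrict s).map T
      = (ENNReal.ofReal c)⁻¹ • (ENNReal.ofReal c • μ.restrict s).map T := by
        rw [Measure.map_smul, smul_smul, ENNReal.inv_mul_cancel hc' ENNReal.ofReal_ne_top, one_smul]
    _ ≤ (ENNReal.ofReal c)⁻¹ • ((μ.restrict s).withDensity
          fun x => ENNReal.ofReal |(fderiv ℝ T x).det|).map T := by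
        gcongr
    _ = (ENNReal.ofReal c)⁻¹ • μ.restrict s := by
        rw [map_withDensity_abs_det_fderiv_eq_addHaar μ hs.nullMeasurableSet hT' hbij.injOn,
          hbij.image_eq]

theorem MeasureTheory.MemLp.comp_of_le_abs_det (hs : MeasurableSet s)
    (hT : ∀ x ∈ s, DifferentiableAt ℝ T x) (hbij : BijOn T s s) (hTm : Measurable T) {c : ℝ}
    (hc : 0 < c) (hJ : ∀ x ∈ s, c ≤ |(fderiv ℝ T x).det|) {p : ℝ≥0∞} {u : E → ℝ}
    (hu : MemLp u p (μ.restrict s)) :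
    MemLp (fun x => u (T x)) p (μ.restrict s) :=
  (hu.of_measure_le_smul (by simpa using hc)
    (map_restrict_le_smul_of_le_abs_det hs hT hbij hTm hc hJ)).comp_of_map hTm.aemeasurable

theorem eLpNorm_comp_le_of_le_abs_det (hs : MeasurableSet s)
    (hT : ∀ x ∈ s, DifferentiableAt ℝ T x) (hbij : BijOn T s s) (hTm : Measurable T) {c : ℝ}
    (hc : 0 < c) (hJ : ∀ x ∈ s, c ≤ |(fderiv ℝ T x).det|) {p : ℝ≥0∞} {u : E → ℝ}
    (hu : AEStronglyMeasurable u (μ.restrict s)) :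
    eLpNorm (fun x => u (T x)) p (μ.restrict s) ≤
      (ENNReal.ofReal c)⁻¹ ^ (1 / p).toReal * eLpNorm u p (μ.restrict s) := by
  have hle := map_restrict_le_smul_of_le_abs_det (μ := μ) hs hT hbij hTm hc hJ
  exact (eLpNorm_map_measure (hu.mono_ac (Measure.absolutelyContinuous_of_le_smul hle))
    hTm.aemeasurable).symm.trans_le (eLpNorm_le_of_measure_le_smul hle)

theorem tendsto_setIntegral_comp_mul_of_boundedContinuous (hs : IsOpen s)
    [IsFiniteMeasure (μ.restrict s)] {u : ℕ → E → ℝ} {u₀ : E → ℝ} {T : ℕ → E → E} {T₀ : E → E}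
    {c C : ℝ} {M : ℝ≥0∞} (hc : 0 < c)
    (hweak : ∀ G, MemLp G 2 (μ.restrict s) → Tendsto (fun n => ∫ y in s, u n y * G y ∂μ) atTop
      (𝓝 (∫ y in s, u₀ y * G y ∂μ)))
    (hu : ∀ n, MemLp (fun x => u n (T n x)) 2 (μ.restrict s))
    (hM : ∀ n, eLpNorm (fun x => u n (T n x)) 2 (μ.restrict s) ≤ M) (hM_top : M ≠ ∞)
    (hT : ∀ n, ∀ x ∈ s, DifferentiableAt ℝ (T n) x) (hbij : ∀ n, BijOn (T n) s s)
    (hJ : ∀ n, ∀ x ∈ s, |(fderiv ℝ (T n) x).det| ≤ C)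
    (hT₀ : ContDiffOn ℝ 1 T₀ s) (hbij₀ : BijOn T₀ s s) (hJ₀ : ∀ x ∈ s, c ≤ |(fderiv ℝ T₀ x).det|)
    (hlim : ∀ x ∈ s, Tendsto (fun n => T n x) atTop (𝓝 (T₀ x)))
    (hlimD : ∀ x ∈ s, Tendsto (fun n => fderiv ℝ (T n) x) atTop (𝓝 (fderiv ℝ T₀ x)))
    (g : E →ᵇ ℝ) :
    Tendsto (fun n => ∫ x in s, u n (T n x) * g x ∂μ) atTop
      (𝓝 (∫ x in s, u₀ (T₀ x) * g x ∂μ)) := by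
  set G := pushforwardDensity T₀ s g
  have hdet₀ : ∀ x ∈ s, (fderiv ℝ T₀ x).det ≠ 0 := fun x hx =>
    abs_pos.1 (hc.trans_le (hJ₀ x hx))
  have hGcont : ContinuousOn G s :=
    continuousOn_pushforwardDensity hs hT₀ hbij₀ hdet₀ g.continuous.continuousOn
  have hGK : ∀ y ∈ s, |G y| ≤ ‖g‖ / c := fun y hy =>
    abs_pushforwardDensity_le hbij₀.surjOn hc hJ₀ (fun x _ => g.norm_coe_le_norm x) hy
  have hG : MemLp G 2 (μ.restrict s) :=
    MemLp.of_bound (hGcont.aestronglyMeasurable hs.measurableSet) _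
      ((ae_restrict_mem hs.measurableSet).mono hGK)
  set w : ℕ → E → ℝ := fun n x => |(fderiv ℝ (T n) x).det| * G (T n x)
  have hwK : ∀ n, ∀ x ∈ s, ‖w n x‖ ≤ C * (‖g‖ / c) := fun n x hx => by
    rw [norm_mul, Real.norm_eq_abs, Real.norm_eq_abs, abs_abs]
    exact mul_le_mul (hJ n x hx) (hGK _ ((hbij n).mapsTo hx)) (abs_nonneg _)
      ((abs_nonneg _).trans (hJ n x hx))
  have habsdet : Continuous fun L : E →L[ℝ] E => |L.det| :=
    continuous_abs.comp ContinuousLinearMap.continuous_det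
  have hwmeas : ∀ n, AEStronglyMeasurable (w n) (μ.restrict s) := fun n =>
    (habsdet.measurable.comp (measurable_fderiv ℝ (T n))).aestronglyMeasurable.mul
      ((hGcont.comp (fun x hx => (hT n x hx).continuousAt.continuousWithinAt)
        (hbij n).mapsTo).aestronglyMeasurable hs.measurableSet)
  have hg : MemLp g 2 (μ.restrict s) :=
    MemLp.of_bound g.continuous.aestronglyMeasurable ‖g‖ (Eventually.of_forall g.norm_coe_le_norm)
  have hwg : Tendsto (fun n => eLpNorm (w n - ⇑g) 2 (μ.restrict s)) atTop (𝓝 0) := by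
    refine tendsto_eLpNorm_sub_of_tendsto_ae_of_norm_le one_le_two ENNReal.ofNat_ne_top hwmeas hg
      (fun n => (ae_restrict_mem hs.measurableSet).mono (hwK n)) ?_
    filter_upwards [ae_restrict_mem hs.measurableSet] with x hx
    rw [← abs_det_mul_pushforwardDensity_apply hbij₀.injOn hx (hdet₀ x hx) g]
    exact ((habsdet.tendsto _).comp (hlimD x hx)).mul
      ((hGcont.continuousAt (hs.mem_nhds (hbij₀.mapsTo hx))).tendsto.comp (hlim x hx))
  have hpair : Tendsto (fun n => ∫ x in s, u n (T n x) * w n x ∂μ) atTop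
      (𝓝 (∫ x in s, u₀ (T₀ x) * g x ∂μ)) := by
    have hcov₀ := setIntegral_mul_eq_setIntegral_comp_mul_abs_det (μ := μ) hs.measurableSet
      (fun x hx => (hT₀.differentiableOn one_ne_zero).differentiableAt (hs.mem_nhds hx)) hbij₀ u₀ G
    rw [setIntegral_congr_fun hs.measurableSet fun x hx => congrArg (u₀ (T₀ x) * ·)
      (abs_det_mul_pushforwardDensity_apply hbij₀.injOn hx (hdet₀ x hx) g)] at hcov₀
    rw [← hcov₀]
    exact (hweak G hG).congr fun n =>
      setIntegral_mul_eq_setIntegral_comp_mul_abs_det hs.measurableSet (hT n) (hbij n) (u n) G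
  exact tendsto_integral_mul_of_tendsto_eLpNorm_sub hu hM hM_top
    (fun n => MemLp.of_bound (hwmeas n) _ ((ae_restrict_mem hs.measurableSet).mono (hwK n))) hg
    hwg hpair

end ChangeOfVariables

theorem composed_weak_convergence_L2_general
    {d : ℕ} (Ω : Set (EuclideanSpace ℝ (Fin d)))
    (hΩopen : IsOpen Ω) (hΩbdd : Bornology.IsBounded Ω)
    (f : ℕ → EuclideanSpace ℝ (Fin d) → ℝ) (flim : EuclideanSpace ℝ (Fin d) → ℝ)
    (hfmem : ∀ n, MemLp (f n) 2 (volume.restrict Ω))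
    (hflim : MemLp flim 2 (volume.restrict Ω))
    (hweak : ∀ g : EuclideanSpace ℝ (Fin d) → ℝ, MemLp g 2 (volume.restrict Ω) →
      Tendsto (fun n => ∫ x in Ω, f n x * g x) atTop (nhds (∫ x in Ω, flim x * g x)))
    (φn : ℕ → EuclideanSpace ℝ (Fin d) → EuclideanSpace ℝ (Fin d))
    (φ : EuclideanSpace ℝ (Fin d) → EuclideanSpace ℝ (Fin d))
    (hφn : ∀ n, ContDiff ℝ 1 (φn n) ∧ Set.BijOn (φn n) Ω Ω)
    (hφ : ContDiff ℝ 1 φ ∧ Set.BijOn φ Ω Ω)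
    (hconv : TendstoUniformlyOn φn φ atTop Ω)
    (hconvD : TendstoUniformlyOn (fun n x => fderiv ℝ (φn n) x) (fun x => fderiv ℝ φ x)
      atTop Ω)
    (c C : ℝ) (hc : 0 < c)
    (hJac : ∀ n, ∀ x ∈ Ω, c ≤ |(fderiv ℝ (φn n) x).det| ∧ |(fderiv ℝ (φn n) x).det| ≤ C)
    (hJaclim : ∀ x ∈ Ω, c ≤ |(fderiv ℝ φ x).det| ∧ |(fderiv ℝ φ x).det| ≤ C) :
    ∀ g : EuclideanSpace ℝ (Fin d) → ℝ, MemLp g 2 (volume.restrict Ω) →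
      Tendsto (fun n => ∫ x in Ω, f n (φn n x) * g x) atTop
        (nhds (∫ x in Ω, flim (φ x) * g x)) := by
  have hΩ : MeasurableSet Ω := hΩopen.measurableSet
  have : IsFiniteMeasure (volume.restrict Ω) :=
    isFiniteMeasure_restrict.2 hΩbdd.measure_lt_top.ne
  have hdiff {T : EuclideanSpace ℝ (Fin d) → EuclideanSpace ℝ (Fin d)} (hT : ContDiff ℝ 1 T) :
      ∀ x ∈ Ω, DifferentiableAt ℝ T x := fun x _ => hT.differentiable one_ne_zero x
  obtain ⟨M, hM⟩ := exists_eLpNorm_le_of_bddAbove_integral_mul hfmem fun g hg =>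
    (hweak g hg).abs.bddAbove_range
  have hcomp n := (hfmem n).comp_of_le_abs_det hΩ (hdiff (hφn n).1) (hφn n).2
    (hφn n).1.continuous.measurable hc fun x hx => (hJac n x hx).1
  set K := (ENNReal.ofReal c)⁻¹ ^ (1 / 2 : ℝ≥0∞).toReal * M
  have hcompM n : eLpNorm (fun x => f n (φn n x)) 2 (volume.restrict Ω) ≤ K :=
    (eLpNorm_comp_le_of_le_abs_det hΩ (hdiff (hφn n).1) (hφn n).2 (hφn n).1.continuous.measurable
      hc (fun x hx => (hJac n x hx).1) (hfmem n).1).trans (mul_le_mul_right (hM n) _)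
  have hK : K ≠ ∞ := ENNReal.mul_ne_top (ENNReal.rpow_ne_top_of_nonneg (by positivity)
    (ENNReal.inv_ne_top.2 (by positivity))) ENNReal.coe_ne_top
  exact fun g => tendsto_integral_mul_of_forall_boundedContinuous hcomp
    (hflim.comp_of_le_abs_det hΩ (hdiff hφ.1) hφ.2 hφ.1.continuous.measurable hc
      fun x hx => (hJaclim x hx).1) hcompM hK
    (tendsto_setIntegral_comp_mul_of_boundedContinuous hΩopen hc hweak hcomp hcompM hK
      (fun n => hdiff (hφn n).1) (fun n => (hφn n).2) (fun n x hx => (hJac n x hx).2)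
      hφ.1.contDiffOn hφ.2 (fun x hx => (hJaclim x hx).1) (fun x hx => hconv.tendsto_at hx)
      fun x hx => hconvD.tendsto_at hx)

/-- If `fₙ ⇀ f` weakly in `L²(Ω)` with `(fₙ)` bounded, and `φₙ → φ`, `Dφₙ → Dφ`
uniformly with Jacobians uniformly bounded above and below, then
`fₙ ∘ φₙ ⇀ f ∘ φ` weakly in `L²(Ω)`. -/
theorem composed_weak_convergence_L2
    {d : ℕ} (Ω : Set (EuclideanSpace ℝ (Fin d)))
    (hΩopen : IsOpen Ω) (hΩbdd : Bornology.IsBounded Ω)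
    (f : ℕ → EuclideanSpace ℝ (Fin d) → ℝ) (flim : EuclideanSpace ℝ (Fin d) → ℝ)
    (hfmem : ∀ n, MemLp (f n) 2 (volume.restrict Ω))
    (hflim : MemLp flim 2 (volume.restrict Ω))
    (hfbdd : ∃ M : ℝ≥0∞, ∀ n, eLpNorm (f n) 2 (volume.restrict Ω) ≤ M)
    (hweak : ∀ g : EuclideanSpace ℝ (Fin d) → ℝ, MemLp g 2 (volume.restrict Ω) →
      Tendsto (fun n => ∫ x in Ω, f n x * g x) atTop (nhds (∫ x in Ω, flim x * g x)))
    (φn : ℕ → EuclideanSpace ℝ (Fin d) → EuclideanSpace ℝ (Fin d))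
    (φ : EuclideanSpace ℝ (Fin d) → EuclideanSpace ℝ (Fin d))
    (hφn : ∀ n, ContDiff ℝ 1 (φn n) ∧ Set.BijOn (φn n) Ω Ω)
    (hφ : ContDiff ℝ 1 φ ∧ Set.BijOn φ Ω Ω)
    (hconv : TendstoUniformlyOn φn φ atTop Ω)
    (hconvD : TendstoUniformlyOn (fun n x => fderiv ℝ (φn n) x) (fun x => fderiv ℝ φ x)
      atTop Ω)
    (c C : ℝ) (hc : 0 < c)
    (hJac : ∀ n, ∀ x ∈ Ω, c ≤ |(fderiv ℝ (φn n) x).det| ∧ |(fderiv ℝ (φn n) x).det| ≤ C)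
    (hJaclim : ∀ x ∈ Ω, c ≤ |(fderiv ℝ φ x).det| ∧ |(fderiv ℝ φ x).det| ≤ C) :
    ∀ g : EuclideanSpace ℝ (Fin d) → ℝ, MemLp g 2 (volume.restrict Ω) →
      Tendsto (fun n => ∫ x in Ω, f n (φn n x) * g x) atTop
        (nhds (∫ x in Ω, flim (φ x) * g x)) :=
  composed_weak_convergence_L2_general Ω hΩopen hΩbdd f flim hfmem hflim hweak φn φ hφn hφ hconv
    hconvD c C hc hJac hJaclim
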